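/- Let T_4 be the eventually periodic sequence in Z/4Z with initial block 2102203 followed by the infinitely repeated period 232002102021230022302203. Then for every integer k ≥ 0, the Steinhaus triangle of the initial segment T_4[8k+7] of length 8k+7 is strongly balanced in Z/4Z. -/

import Mathlib

/-- Next row of a Steinhaus triangle: pairwise sums of adjacent entries. -/
def nextRow {m : ℕ} (l : List (ZMod m)) : List (ZMod m) :=
  List.zipWith (· + ·) l l.tail

/-- The rows of the Steinhaus triangle generated by the first row `l`. -/
def triangleRows {m : ℕ} (l : List (ZMod m)) : List (List (ZMod m)) :=
  (List.range l.length).map (fun i => nextRow^[i] l)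

/-- All entries of the Steinhaus triangle generated by `l`. -/
def triangleEntries {m : ℕ} (l : List (ZMod m)) : List (ZMod m) :=
  (triangleRows l).flatten

/-- The Steinhaus triangle of `l` is balanced: all elements of `ZMod m`
occur with the same multiplicity among its entries. -/
def IsBalanced {m : ℕ} (l : List (ZMod m)) : Prop :=
  ∀ a b : ZMod m, (triangleEntries l).count a = (triangleEntries l).count b

/-- The Steinhaus triangle of `l` is strongly balanced (with respect to a
given `step`): for every `t` with `step * t ≤ l.length`, the Steinhaus triangle
of the initial segment of `l` of length `l.length - step * t` is balanced. -/
def IsStronglyBalanced {m : ℕ} (step : ℕ) (l : List (ZMod m)) : Prop :=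
  ∀ t : ℕ, step * t ≤ l.length → IsBalanced (l.take (l.length - step * t))

/-- The eventually periodic sequence with initial block `I` and period `P`. -/
def evPeriodic {m : ℕ} (I P : List (ZMod m)) : ℕ → ZMod m :=
  fun i => if i < I.length then I.getD i 0 else P.getD ((i - I.length) % P.length) 0

/-- The initial segment of length `l` of the sequence `S`. -/
def seg {m : ℕ} (S : ℕ → ZMod m) (l : ℕ) : List (ZMod m) :=
  (List.range l).map S

def T4 : ℕ → ZMod 4 :=
  evPeriodic ([2,1,0,2,2,0,3] : List (ZMod 4)) ([2,3,2,0,0,2,1,0,2,0,2,1,2,3,0,0,2,2,3,0,2,2,0,3] : List (ZMod 4))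


/-!
Let `Dᵢ` be the `i`-th derived sequence of `T4` (`Dᵢ₊₁ n = Dᵢ n + Dᵢ (n + 1)`), so that the
Steinhaus triangle of `T4[N]` consists of the entries `Dᵢ n` with `i + n < N`. Every `Dᵢ` is
24-periodic from index 7, and `Dᵢ₊₂₄ = Dᵢ` for `i ≥ 6`; by the horizontal periodicity the latter
only has to be checked on 31 entries of `D₆` and `D₃₀`.

For an array that is eventually periodic with period `p` in both directions, the number `c(N)` of
occurrences of a value in the triangle `i + n < N` is such that, for large `N`,
`c(N + 2p) - 2 c(N + p) + c(N)` equals the number of its occurrences in one `p × p` period box: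
passing from the band of antidiagonals `[N, N + p)` to the next one adds exactly one copy of the
box. Each residue occurs 144 times in a `24 × 24` box of the `Dᵢ`, so balancedness of `T4[N]` and
of `T4[N + 24]` entails that of `T4[N + 48]`; the triangles of `T4[8k + 7]` for `k < 10` are
checked directly.
-/

open Finset

section TriangleSum

variable {β : Type*} [AddCommMonoid β]

def triangleSum (f : ℕ → ℕ → β) (N : ℕ) : β :=
  ∑ i ∈ range N, ∑ n ∈ range (N - i), f i n

def antidiagSum (f : ℕ → ℕ → β) (d : ℕ) : β :=
  ∑ i ∈ range (d + 1), f i (d - i)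

theorem triangleSum_succ (f : ℕ → ℕ → β) (N : ℕ) :
    triangleSum f (N + 1) = triangleSum f N + antidiagSum f N := by
  have hrow : ∀ i ∈ range N, ∑ n ∈ range (N + 1 - i), f i n
      = ∑ n ∈ range (N - i), f i n + f i (N - i) := fun i hi => by
    rw [Nat.sub_add_comm (mem_range.mp hi).le, sum_range_succ]
  unfold triangleSum antidiagSum
  rw [sum_range_succ, sum_congr rfl hrow, sum_add_distrib, Nat.add_sub_cancel_left, range_one,
    sum_singleton, sum_range_succ, Nat.sub_self, add_assoc]

theorem triangleSum_add (f : ℕ → ℕ → β) (N k : ℕ) :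
    triangleSum f (N + k) = triangleSum f N + ∑ d ∈ range k, antidiagSum f (N + d) := by
  induction k with
  | zero => simp
  | succ k ih => rw [← add_assoc, triangleSum_succ, ih, sum_range_succ, add_assoc]

theorem sum_range_add_eq_of_periodic {g : ℕ → β} {p n₀ : ℕ}
    (hg : ∀ n, n₀ ≤ n → g (n + p) = g n) {N : ℕ} (hN : n₀ ≤ N) :
    ∑ d ∈ range p, g (N + d) = ∑ d ∈ range p, g (n₀ + d) := by
  obtain ⟨k, rfl⟩ := Nat.exists_eq_add_of_le hN
  induction k with
  | zero => rfl
  | succ k ih =>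
    rw [← ih (Nat.le_add_right _ _)]
    cases p with
    | zero => rfl
    | succ p =>
      rw [sum_range_succ, sum_range_succ', show n₀ + (k + 1) + p = n₀ + k + (p + 1) by ring,
        hg _ (Nat.le_add_right _ _)]
      simp only [Nat.add_zero, Nat.add_assoc, Nat.add_comm 1]

variable {f : ℕ → ℕ → β} {p i₀ n₀ : ℕ}

theorem antidiagSum_add_period (hrow : ∀ i n, n₀ ≤ n → f i (n + p) = f i n)
    (hcol : ∀ i n, i₀ ≤ i → f (i + p) n = f i n) {d : ℕ} (hd : i₀ + n₀ + p ≤ d + 1) :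
    antidiagSum f (d + p) = antidiagSum f d + ∑ j ∈ range p, f (i₀ + j) (d - (i₀ + j)) := by
  obtain ⟨r, hr⟩ : ∃ r, d + 1 = i₀ + p + r := ⟨d + 1 - (i₀ + p), by omega⟩
  have hlow : ∀ i ∈ range (i₀ + p), f i (d + p - i) = f i (d - i) := fun i hi => by
    have := mem_range.mp hi
    rw [← hrow i (d - i) (by omega)]
    congr 1
    omega
  have hbox : ∀ j ∈ range p, f (i₀ + p + j) (d + p - (i₀ + p + j)) = f (i₀ + j) (d - (i₀ + j)) :=
    fun j _ => by
      rw [show i₀ + p + j = i₀ + j + p by omega, hcol _ _ (by omega)]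
      congr 1
      omega
  have hhigh : ∀ k ∈ range r, f (i₀ + p + (p + k)) (d + p - (i₀ + p + (p + k)))
      = f (i₀ + p + k) (d - (i₀ + p + k)) := fun k _ => by
    rw [show i₀ + p + (p + k) = i₀ + p + k + p by omega, hcol _ _ (by omega)]
    congr 1
    omega
  -- split the antidiagonal `d + p` at `i₀ + p` and `i₀ + 2p`
  rw [antidiagSum, antidiagSum, show d + p + 1 = i₀ + p + (p + r) by omega, hr,
    sum_range_add _ (i₀ + p) (p + r), sum_range_add _ (i₀ + p) r, sum_range_add _ p r,
    sum_congr rfl hlow, sum_congr rfl hbox, sum_congr rfl hhigh]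
  abel

theorem triangleSum_add_two_mul_period (hrow : ∀ i n, n₀ ≤ n → f i (n + p) = f i n)
    (hcol : ∀ i n, i₀ ≤ i → f (i + p) n = f i n) {N : ℕ} (hN : i₀ + n₀ + p ≤ N + 1) :
    triangleSum f (N + 2 * p) + triangleSum f N
      = triangleSum f (N + p) + triangleSum f (N + p)
        + ∑ i ∈ range p, ∑ n ∈ range p, f (i₀ + i) (n₀ + n) := by
  have hband : ∑ d ∈ range p, antidiagSum f (N + p + d)
      = ∑ d ∈ range p, antidiagSum f (N + d)
        + ∑ i ∈ range p, ∑ n ∈ range p, f (i₀ + i) (n₀ + n) := by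
    have hdiag : ∀ d ∈ range p, antidiagSum f (N + p + d)
        = antidiagSum f (N + d) + ∑ j ∈ range p, f (i₀ + j) (N + d - (i₀ + j)) := fun d _ => by
      rw [add_right_comm, antidiagSum_add_period hrow hcol (by omega)]
    have hbox : ∀ j ∈ range p, ∑ d ∈ range p, f (i₀ + j) (N + d - (i₀ + j))
        = ∑ n ∈ range p, f (i₀ + j) (n₀ + n) := fun j hj => by
      have := mem_range.mp hj
      rw [← sum_range_add_eq_of_periodic (hrow (i₀ + j)) (N := N - (i₀ + j)) (by omega)]
      refine sum_congr rfl fun d _ => ?_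
      congr 1
      omega
    rw [sum_congr rfl hdiag, sum_add_distrib, sum_comm, sum_congr rfl hbox]
  rw [two_mul, ← add_assoc, triangleSum_add f (N + p), hband, triangleSum_add f N]
  abel

end TriangleSum

section DerivedSeq

variable {M : Type*} [Add M]

def derivedSeq (S : ℕ → M) : ℕ → M := fun n => S n + S (n + 1)

theorem derivedSeq_iterate_add_of_periodic {S : ℕ → M} {p n₀ : ℕ}
    (hS : ∀ n, n₀ ≤ n → S (n + p) = S n) (i : ℕ) :
    ∀ n, n₀ ≤ n → derivedSeq^[i] S (n + p) = derivedSeq^[i] S n := by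
  induction i with
  | zero => exact hS
  | succ i ih =>
    intro n hn
    simp only [Function.iterate_succ_apply', derivedSeq]
    rw [ih n hn, add_right_comm, ih (n + 1) (by omega)]

theorem derivedSeq_iterate_add_of_eq {S : ℕ → M} {i₀ q : ℕ}
    (h : derivedSeq^[i₀ + q] S = derivedSeq^[i₀] S) {i : ℕ} (hi : i₀ ≤ i) :
    derivedSeq^[i + q] S = derivedSeq^[i] S := by
  obtain ⟨k, rfl⟩ := Nat.exists_eq_add_of_le hi
  rw [add_right_comm, add_comm, Function.iterate_add_apply, h, ← Function.iterate_add_apply,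
    add_comm]

end DerivedSeq

theorem eq_of_periodic_of_eqOn {α : Type*} {g h : ℕ → α} {p n₀ : ℕ} (hp : 0 < p)
    (hg : ∀ n, n₀ ≤ n → g (n + p) = g n) (hh : ∀ n, n₀ ≤ n → h (n + p) = h n)
    (heq : ∀ n < n₀ + p, g n = h n) : g = h := by
  funext n
  induction n using Nat.strong_induction_on with
  | _ n ih =>
    by_cases hn : n < n₀ + p
    · exact heq n hn
    · obtain ⟨k, rfl⟩ : ∃ k, n = k + p := ⟨n - p, by omega⟩
      rw [hg k (by omega), hh k (by omega), ih k (by omega)]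

section Steinhaus

variable {m : ℕ}

theorem length_seg (S : ℕ → ZMod m) (L : ℕ) : (seg S L).length = L := by
  simp [seg]

theorem nextRow_seg (S : ℕ → ZMod m) (N : ℕ) :
    nextRow (seg S N) = seg (derivedSeq S) (N - 1) := by
  apply List.ext_getElem
  · simp [nextRow, seg]
  · intro n _ _
    simp [nextRow, seg, derivedSeq]

theorem nextRow_iterate_seg (S : ℕ → ZMod m) (i N : ℕ) :
    nextRow^[i] (seg S N) = seg (derivedSeq^[i] S) (N - i) := by
  induction i with
  | zero => rfl
  | succ i ih =>
    rw [Function.iterate_succ_apply', ih, nextRow_seg, Function.iterate_succ_apply', Nat.sub_sub]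

theorem eq_of_seg_eq {S S' : ℕ → ZMod m} {L : ℕ} (h : seg S L = seg S' L) {n : ℕ} (hn : n < L) :
    S n = S' n :=
  List.map_inj_left.mp h n (List.mem_range.mpr hn)

theorem take_seg (S : ℕ → ZMod m) {L N : ℕ} (h : L ≤ N) : (seg S N).take L = seg S L := by
  rw [seg, ← List.map_take, List.take_range, min_eq_left h, seg]

theorem drop_seg (S : ℕ → ZMod m) (s L : ℕ) :
    (seg S (s + L)).drop s = seg (fun n => S (s + n)) L := by
  apply List.ext_getElem
  · simp [seg]
  · intro n _ _
    simp [seg]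

theorem count_seg (S : ℕ → ZMod m) (a : ZMod m) (L : ℕ) :
    (seg S L).count a = ∑ n ∈ range L, if S n = a then 1 else 0 := by
  induction L with
  | zero => rfl
  | succ L ih =>
    rw [seg, List.range_succ, List.map_append, List.count_append, ← seg, ih, sum_range_succ]
    simp [List.count_singleton', eq_comm]

theorem count_triangleEntries_seg (S : ℕ → ZMod m) (a : ZMod m) (N : ℕ) :
    (triangleEntries (seg S N)).count a
      = triangleSum (fun i n => if derivedSeq^[i] S n = a then 1 else 0) N := by
  rw [triangleEntries, triangleRows, List.count_flatten, List.map_map, length_seg]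
  change ∑ i ∈ range N, (nextRow^[i] (seg S N)).count a = _
  exact sum_congr rfl fun i _ => by rw [nextRow_iterate_seg, count_seg]

end Steinhaus

theorem T4_add_period {n : ℕ} (hn : 7 ≤ n) : T4 (n + 24) = T4 n := by
  simp only [T4, evPeriodic, List.length_cons, List.length_nil]
  rw [if_neg (by omega), if_neg (by omega), show n + 24 - 7 = n - 7 + 24 by omega,
    Nat.add_mod_right]

theorem derivedSeq_iterate_T4_apply_add_24 (i : ℕ) {n : ℕ} (hn : 7 ≤ n) :
    derivedSeq^[i] T4 (n + 24) = derivedSeq^[i] T4 n :=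
  derivedSeq_iterate_add_of_periodic (fun _ => T4_add_period) i n hn

theorem derivedSeq_iterate_add_24_T4 {i : ℕ} (hi : 6 ≤ i) :
    derivedSeq^[i + 24] T4 = derivedSeq^[i] T4 := by
  refine derivedSeq_iterate_add_of_eq ?_ hi
  have hwindow : nextRow^[30] (seg T4 61) = nextRow^[6] (seg T4 37) := by decide +kernel
  rw [nextRow_iterate_seg, nextRow_iterate_seg] at hwindow
  exact eq_of_periodic_of_eqOn (by norm_num) (fun n => derivedSeq_iterate_T4_apply_add_24 _)
    (fun n => derivedSeq_iterate_T4_apply_add_24 _) fun n hn => eq_of_seg_eq hwindow (by omega)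

theorem sum_periodBox_T4 (a : ZMod 4) :
    ∑ i ∈ range 24, ∑ n ∈ range 24, (if derivedSeq^[6 + i] T4 (7 + n) = a then 1 else 0)
      = 144 := by
  have hcount : ∀ a : ZMod 4,
      ∑ i ∈ range 24, ((nextRow^[6 + i] (seg T4 (37 + i))).drop 7).count a = 144 := by
    decide +kernel
  rw [← hcount a]
  refine sum_congr rfl fun i _ => ?_
  rw [nextRow_iterate_seg, show 37 + i - (6 + i) = 7 + 24 by omega, drop_seg, count_seg]

theorem count_triangleEntries_seg_T4_add_48 (a : ZMod 4) {N : ℕ} (hN : 36 ≤ N) :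
    (triangleEntries (seg T4 (N + 48))).count a + (triangleEntries (seg T4 N)).count a
      = (triangleEntries (seg T4 (N + 24))).count a
        + (triangleEntries (seg T4 (N + 24))).count a + 144 := by
  have key := triangleSum_add_two_mul_period (N := N) (i₀ := 6) (n₀ := 7)
    (f := fun i n => if derivedSeq^[i] T4 n = a then 1 else 0)
    (fun i n hn => by rw [derivedSeq_iterate_T4_apply_add_24 i hn])
    (fun i n hi => by rw [derivedSeq_iterate_add_24_T4 hi]) (by omega)
  rwa [sum_periodBox_T4, ← count_triangleEntries_seg, ← count_triangleEntries_seg,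
    ← count_triangleEntries_seg] at key

theorem isBalanced_seg_T4_of_lt : ∀ k < 10, IsBalanced (seg T4 (8 * k + 7)) := by
  unfold IsBalanced
  decide +kernel

theorem isBalanced_seg_T4 (k : ℕ) : IsBalanced (seg T4 (8 * k + 7)) := by
  induction k using Nat.strong_induction_on with
  | _ k ih =>
    rcases lt_or_ge k 10 with hk | hk
    · exact isBalanced_seg_T4_of_lt k hk
    obtain ⟨j, rfl⟩ : ∃ j, k = j + 6 := ⟨k - 6, by omega⟩
    intro a b
    have h₀ := ih j (by omega) a b
    have h₁ := ih (j + 3) (by omega) a b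
    have ha := count_triangleEntries_seg_T4_add_48 a (N := 8 * j + 7) (by omega)
    have hb := count_triangleEntries_seg_T4_add_48 b (N := 8 * j + 7) (by omega)
    rw [show 8 * (j + 3) + 7 = 8 * j + 7 + 24 by ring] at h₁
    rw [show 8 * (j + 6) + 7 = 8 * j + 7 + 48 by ring]
    omega

theorem stmt6 (k : ℕ) :
    IsStronglyBalanced 8 (seg T4 (8 * k + 7)) := by
  intro t ht
  rw [length_seg] at ht ⊢
  rw [take_seg T4 (Nat.sub_le _ _), show 8 * k + 7 - 8 * t = 8 * (k - t) + 7 by omega]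
  exact isBalanced_seg_T4 (k - t)
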